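/- arXiv:1808.08736 — 2 statements merged into one kernel-verified Lean document; each statement's English description precedes it below -/
import Mathlib

section
/- Let ν ∈ (0,1], k ≥ 1 a real number, λ ∈ ℝ, and 0 < ε ≤ 1. Set L = (k/ν)^{1/3} and d = −1−λ−ikν ∈ ℂ. Then there exists an absolute constant c > 0 (independent of ν, k, λ, ε, x) such that for every x ≥ 0: ∫_0^{Lx} (1 + |t + Ld + iε|^{1/2}) dt ≥ c·( Lx·|Ld|^{1/2} + (Lx)^{3/2} ), where |·| denotes the modulus of a complex number. -/
/-!
With `a = L x`, `w = L d`, `η = i ε` and `z = w + η`, write `g t = √‖t + z‖`.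
Since `‖t + z‖ + ‖t + a/2 + z‖ ≥ a/2`, pairing `t` with `t + a/2` gives `∫₀ᵃ g ≥ a^{3/2}/4`.
Since `√‖z‖ ≤ g t + √t`, integrating gives `a √‖z‖ ≤ ∫₀ᵃ g + a^{3/2}`. Finally
`√‖w‖ ≤ √‖z‖ + 1` because `‖η‖ ≤ 1`, and the constant `1` in the integrand absorbs the extra `a`.
-/

open intervalIntegral

lemma Real.sqrt_add_le_add_sqrt {x y : ℝ} (hx : 0 ≤ x) (hy : 0 ≤ y) :
    √(x + y) ≤ √x + √y := by
  rw [Real.sqrt_le_left (by positivity)]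
  nlinarith [Real.sq_sqrt hx, Real.sq_sqrt hy, Real.sqrt_nonneg x, Real.sqrt_nonneg y]

lemma Real.sqrt_norm_add_le {E : Type*} [SeminormedAddGroup E] (u v : E) :
    √‖u + v‖ ≤ √‖u‖ + √‖v‖ :=
  (Real.sqrt_le_sqrt (norm_add_le u v)).trans
    (Real.sqrt_add_le_add_sqrt (norm_nonneg u) (norm_nonneg v))

section SqrtNormShift

variable (z : ℂ) {a : ℝ}

lemma continuous_sqrt_norm_ofReal_add : Continuous fun t : ℝ => √‖(t : ℂ) + z‖ := by
  fun_prop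

lemma mul_sqrt_le_four_mul_integral_sqrt_norm (ha : 0 ≤ a) :
    a * √a ≤ 4 * ∫ t in (0 : ℝ)..a, √‖(t : ℂ) + z‖ := by
  set g : ℝ → ℝ := fun t => √‖(t : ℂ) + z‖
  have hg : Continuous g := continuous_sqrt_norm_ofReal_add z
  have hg' : Continuous fun t => g (t + a / 2) := hg.comp (continuous_add_const _)
  have hsplit : ∫ t in (0 : ℝ)..a, g t = ∫ t in (0 : ℝ)..a / 2, (g t + g (t + a / 2)) := by
    rw [integral_add (hg.intervalIntegrable _ _) (hg'.intervalIntegrable _ _),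
      integral_comp_add_right, zero_add, add_halves,
      integral_add_adjacent_intervals (hg.intervalIntegrable _ _) (hg.intervalIntegrable _ _)]
  have hpair : ∀ t : ℝ, √a / 2 ≤ g t + g (t + a / 2) := by
    intro t
    have htri : a / 2 ≤ ‖(t : ℂ) + z‖ + ‖((t + a / 2 : ℝ) : ℂ) + z‖ := by
      have h := norm_sub_le (((t + a / 2 : ℝ) : ℂ) + z) ((t : ℂ) + z)
      rw [show ((t + a / 2 : ℝ) : ℂ) + z - ((t : ℂ) + z) = ((a / 2 : ℝ) : ℂ) by push_cast; ring,
        Complex.norm_real, Real.norm_of_nonneg (by positivity)] at h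
      linarith
    calc √a / 2 ≤ √(‖(t : ℂ) + z‖ + ‖((t + a / 2 : ℝ) : ℂ) + z‖) := by
          rw [Real.le_sqrt (by positivity) (by positivity), div_pow, Real.sq_sqrt ha]
          linarith
      _ ≤ g t + g (t + a / 2) := Real.sqrt_add_le_add_sqrt (norm_nonneg _) (norm_nonneg _)
  have hlower : ∫ _ in (0 : ℝ)..a / 2, √a / 2 ≤ ∫ t in (0 : ℝ)..a / 2, (g t + g (t + a / 2)) :=
    integral_mono_on (by positivity) intervalIntegrable_const
      ((hg.add hg').intervalIntegrable _ _) fun t _ => hpair t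
  rw [integral_const, smul_eq_mul] at hlower
  linarith

lemma mul_sqrt_norm_le_integral_sqrt_norm_add (ha : 0 ≤ a) :
    a * √‖z‖ ≤ (∫ t in (0 : ℝ)..a, √‖(t : ℂ) + z‖) + a * √a := by
  have hpoint : ∀ t ∈ Set.Icc 0 a, √‖z‖ ≤ √‖(t : ℂ) + z‖ + √a := by
    intro t ht
    have h := Real.sqrt_norm_add_le ((t : ℂ) + z) (-(t : ℂ))
    rw [add_neg_cancel_comm, norm_neg, Complex.norm_real, Real.norm_of_nonneg ht.1] at h
    linarith [Real.sqrt_le_sqrt ht.2]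
  have h : ∫ _ in (0 : ℝ)..a, √‖z‖ ≤ ∫ t in (0 : ℝ)..a, (√‖(t : ℂ) + z‖ + √a) :=
    integral_mono_on ha intervalIntegrable_const
      (((continuous_sqrt_norm_ofReal_add z).add continuous_const).intervalIntegrable 0 a) hpoint
  rwa [integral_const, smul_eq_mul, sub_zero,
    integral_add ((continuous_sqrt_norm_ofReal_add z).intervalIntegrable 0 a)
      intervalIntegrable_const, integral_const, smul_eq_mul, sub_zero] at h

end SqrtNormShift

theorem mul_sqrt_norm_add_mul_sqrt_le_integral (w η : ℂ) (hη : ‖η‖ ≤ 1) {a : ℝ} (ha : 0 ≤ a) :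
    a * √‖w‖ + a * √a ≤ 9 * ∫ t in (0 : ℝ)..a, (1 + √‖(t : ℂ) + w + η‖) := by
  set z := w + η
  have hw : √‖w‖ ≤ √‖z‖ + 1 := by
    have h := Real.sqrt_norm_add_le z (-η)
    rw [add_neg_cancel_right, norm_neg] at h
    linarith [Real.sqrt_le_one.mpr hη]
  have h1 := mul_sqrt_le_four_mul_integral_sqrt_norm z ha
  have h2 := mul_sqrt_norm_le_integral_sqrt_norm_add z ha
  simp_rw [add_assoc]
  rw [integral_add intervalIntegrable_const
      ((continuous_sqrt_norm_ofReal_add z).intervalIntegrable 0 a), integral_const,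
    smul_eq_mul, sub_zero, mul_one]
  nlinarith [mul_le_mul_of_nonneg_left hw ha]

/-- Key Airy-related integral estimate (Lemma 8.5 of the paper). -/
theorem statement17 :
    ∃ c : ℝ, 0 < c ∧
      ∀ (ν k lam ε : ℝ) (L : ℝ) (d : ℂ),
        0 < ν → ν ≤ 1 → 1 ≤ k → 0 < ε → ε ≤ 1 →
        L = (k / ν) ^ ((1:ℝ)/3) →
        d = -1 - (lam : ℂ) - Complex.I * (k : ℂ) * (ν : ℂ) →
        ∀ x : ℝ, 0 ≤ x →
          c * (L * x * ‖(L : ℂ) * d‖ ^ ((1:ℝ)/2) + (L * x) ^ ((3:ℝ)/2))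
            ≤ ∫ t in Set.Ioc (0:ℝ) (L * x),
                (1 + ‖(t : ℂ) + (L : ℂ) * d + Complex.I * (ε : ℂ)‖ ^ ((1:ℝ)/2)) := by
  refine ⟨1 / 9, by norm_num, ?_⟩
  intro ν k lam ε L d hν _ hk hε hε1 hL _ x hx
  have ha : 0 ≤ L * x := mul_nonneg (hL ▸ by positivity) hx
  have hη : ‖Complex.I * (ε : ℂ)‖ ≤ 1 := by
    rwa [norm_mul, Complex.norm_I, one_mul, Complex.norm_real, Real.norm_of_nonneg hε.le]
  have hpow : (L * x) ^ ((3 : ℝ) / 2) = L * x * √(L * x) := by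
    rw [show (3 : ℝ) / 2 = 1 + 1 / 2 by norm_num, Real.rpow_add' ha (by norm_num),
      Real.rpow_one, Real.sqrt_eq_rpow]
  simp_rw [← Real.sqrt_eq_rpow, hpow, ← integral_of_le ha]
  linarith [mul_sqrt_norm_add_mul_sqrt_le_integral ((L : ℂ) * d) _ hη ha]
end

section
/- Let k ∈ ℤ with |k| ≥ 1, let w : [−1,1] → ℂ be continuous, and let φ : [−1,1] → ℂ be twice continuously differentiable with φ''(y) − k²φ(y) = w(y) on [−1,1] and φ(−1) = φ(1) = 0. Then there is a constant C > 0, independent of k, w, φ, such that: (i) ‖φ'‖_{L²}² + k²‖φ‖_{L²}² = ⟨−w, φ⟩ ≤ C|k|^{−1}‖w‖_{L¹}²; (ii) ‖φ'‖_{L∞} + |k|·‖φ‖_{L∞} ≤ C‖w‖_{L¹}; (iii) ‖φ'‖_{L∞} + |k|·‖φ‖_{L∞} ≤ C|k|^{−1/2}‖w‖_{L²}. -/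
/-- The `L²` norm of a function on the interval `[-1,1]`. -/
noncomputable def nL2 (f : ℝ → ℂ) : ℝ :=
  (∫ y in Set.Icc (-1:ℝ) 1, ‖f y‖ ^ 2) ^ ((1:ℝ)/2)

/-- The `L¹` norm of a function on the interval `[-1,1]`. -/
noncomputable def nL1 (f : ℝ → ℂ) : ℝ :=
  ∫ y in Set.Icc (-1:ℝ) 1, ‖f y‖

/-- The `L^∞` norm of a function on the interval `[-1,1]`. -/
noncomputable def nLinf (f : ℝ → ℂ) : ℝ :=
  ⨆ y : ↥(Set.Icc (-1:ℝ) 1), ‖f (y : ℝ)‖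

/-- The `L²` pairing of two functions on the interval `[-1,1]`. -/
noncomputable def innI (f g : ℝ → ℂ) : ℂ :=
  ∫ y in Set.Icc (-1:ℝ) 1, f y * (starRingEnd ℂ) (g y)

/-!
With `m = |k|`, the combinations `u = φ' + m φ` and `v = φ' - m φ` satisfy the first-order
equations `u' = m u + w` and `v' = -m v + w`. Integrating factors bound `|u(y)|` by
`e^{-m(1-y)} |u(1)|` and `|v(y)|` by `e^{-m(y+1)} |v(-1)|`, each plus the kernel integral
`∫ e^{-m|y-s|} |w(s)| ds`. Since `φ(±1) = 0`, both `u` and `v` equal `φ'` at the endpoints, and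
because `e^{-2m} ≤ 1/2` the two endpoint inequalities bound `|φ'(±1)|`, hence `|φ'| + m|φ|`
everywhere, by a multiple of the kernel integral. The kernel is at most `1` and its square has
integral at most `1/m`, which gives the `L¹` and (by Cauchy–Schwarz) the `L²` versions. The
identity in (i) is integration by parts against `φ̄`, and its bound is `‖w‖_{L¹} ‖φ‖_{L^∞}`.
-/

open MeasureTheory Set Real

section VectorValued

variable {E : Type*} [NormedAddCommGroup E]

noncomputable def expKernelIntegral (m : ℝ) (g : ℝ → E) (y : ℝ) : ℝ :=
  ∫ s in (-1:ℝ)..1, exp (-(m * |y - s|)) * ‖g s‖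

theorem expKernelIntegral_congr {m : ℝ} {g w : ℝ → E} (h : EqOn g w (Icc (-1:ℝ) 1)) (y : ℝ) :
    expKernelIntegral m g y = expKernelIntegral m w y :=
  intervalIntegral.integral_congr fun s hs => by
    rw [uIcc_of_le (by norm_num)] at hs
    rw [h hs]

variable [NormedSpace ℝ E]

theorem setIntegral_Icc_eq_intervalIntegral {a b : ℝ} (hab : a ≤ b) (f : ℝ → E) :
    ∫ x in Icc a b, f x = ∫ x in a..b, f x := by
  rw [integral_Icc_eq_integral_Ioc, intervalIntegral.integral_of_le hab]

variable [CompleteSpace E]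

theorem norm_le_of_hasDerivAt_smul_add {m y b : ℝ} {u g : ℝ → E}
    (hu : ∀ t, HasDerivAt u (m • u t + g t) t) (hg : Continuous g) (hyb : y ≤ b) :
    ‖u y‖ ≤ exp (-(m * (b - y))) * ‖u b‖ + ∫ s in y..b, exp (-(m * |y - s|)) * ‖g s‖ := by
  have hF : ∀ t, HasDerivAt (fun t => exp (m * (y - t)) • u t) (exp (m * (y - t)) • g t) t := by
    intro t
    have he : HasDerivAt (fun t => exp (m * (y - t))) (exp (m * (y - t)) * -m) t := by
      simpa using ((hasDerivAt_id t).const_sub y |>.const_mul m).exp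
    exact (he.smul (hu t)).congr_deriv (by module)
  have hduhamel : u y = exp (m * (y - b)) • u b - ∫ s in y..b, exp (m * (y - s)) • g s := by
    rw [intervalIntegral.integral_eq_sub_of_hasDerivAt (fun t _ => hF t)
      ((by fun_prop : Continuous fun s => exp (m * (y - s)) • g s).intervalIntegrable _ _)]
    simp
  have hkernel : ∀ s ∈ Icc y b, ‖exp (m * (y - s)) • g s‖ = exp (-(m * |y - s|)) * ‖g s‖ := by
    intro s hs
    rw [norm_smul, norm_of_nonneg (exp_pos _).le, abs_of_nonpos (by linarith [hs.1])]
    ring_nf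
  calc ‖u y‖ ≤ ‖exp (m * (y - b)) • u b‖ + ‖∫ s in y..b, exp (m * (y - s)) • g s‖ :=
        hduhamel ▸ norm_sub_le _ _
    _ ≤ exp (-(m * (b - y))) * ‖u b‖ + ∫ s in y..b, exp (-(m * |y - s|)) * ‖g s‖ := by
        refine add_le_add (le_of_eq ?_) ?_
        · rw [norm_smul, norm_of_nonneg (exp_pos _).le, show m * (y - b) = -(m * (b - y)) by ring]
        · refine (intervalIntegral.norm_integral_le_integral_norm hyb).trans_eq ?_
          exact intervalIntegral.integral_congr fun s hs =>
            hkernel s (by rwa [uIcc_of_le hyb] at hs)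

theorem norm_le_of_hasDerivAt_neg_smul_add {m a y : ℝ} {v g : ℝ → E}
    (hv : ∀ t, HasDerivAt v (-(m • v t) + g t) t) (hg : Continuous g) (hay : a ≤ y) :
    ‖v y‖ ≤ exp (-(m * (y - a))) * ‖v a‖ + ∫ s in a..y, exp (-(m * |y - s|)) * ‖g s‖ := by
  have hrev : ∀ t, HasDerivAt (fun t => v (-t)) (m • v (-t) + -g (-t)) t := fun t =>
    ((hv (-t)).scomp t (hasDerivAt_neg t)).congr_deriv (by module)
  have := norm_le_of_hasDerivAt_smul_add hrev (by fun_prop) (neg_le_neg hay)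
  have hrefl := intervalIntegral.integral_comp_neg (a := -y) (b := -a)
    (fun s => exp (-(m * |y - s|)) * ‖g s‖)
  rw [neg_neg, neg_neg] at hrefl
  simp only [neg_neg, norm_neg] at this
  rw [← hrefl]
  convert this using 5
  · ring
  · rw [← abs_neg]; ring_nf

theorem norm_deriv_add_smul_le_and_norm_deriv_sub_smul_le {m B : ℝ} {φ : ℝ → E}
    (hφ : ContDiff ℝ 2 φ) (h_neg_one : φ (-1) = 0) (h_one : φ 1 = 0)
    (hB : ∀ y ∈ Icc (-1:ℝ) 1,
      expKernelIntegral m (fun s => deriv (deriv φ) s - m ^ 2 • φ s) y ≤ B)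
    {y : ℝ} (hy : y ∈ Icc (-1:ℝ) 1) :
    ‖deriv φ y + m • φ y‖ ≤ exp (-(m * (1 - y))) * ‖deriv φ 1‖ + B ∧
      ‖deriv φ y - m • φ y‖ ≤ exp (-(m * (y + 1))) * ‖deriv φ (-1)‖ + B := by
  set g := fun s => deriv (deriv φ) s - m ^ 2 • φ s
  have hφ' := hφ.differentiable (by norm_num)
  have hφ'' := hφ.differentiable_deriv_two
  have hg : Continuous g := (hφ.deriv' (n := 1)).continuous_deriv_one.sub (by fun_prop)
  have hpart : ∀ {a b}, -1 ≤ a → a ≤ b → b ≤ 1 →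
      ∫ s in a..b, exp (-(m * |y - s|)) * ‖g s‖ ≤ B := fun ha hab hb =>
    (intervalIntegral.integral_mono_interval ha hab hb
      (Filter.Eventually.of_forall fun s => by positivity)
      ((by fun_prop : Continuous fun s => exp (-(m * |y - s|)) * ‖g s‖).intervalIntegrable
        _ _)).trans (hB y hy)
  constructor
  · have hu : ∀ t, HasDerivAt (fun t => deriv φ t + m • φ t) (m • (deriv φ t + m • φ t) + g t) t :=
      fun t => ((hφ'' t).hasDerivAt.add ((hφ' t).hasDerivAt.const_smul m)).congr_deriv (by module)
    have := norm_le_of_hasDerivAt_smul_add hu hg hy.2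
    rw [h_one, smul_zero, add_zero] at this
    linarith [hpart hy.1 hy.2 le_rfl]
  · have hv : ∀ t,
        HasDerivAt (fun t => deriv φ t - m • φ t) (-(m • (deriv φ t - m • φ t)) + g t) t :=
      fun t => ((hφ'' t).hasDerivAt.sub ((hφ' t).hasDerivAt.const_smul m)).congr_deriv (by module)
    have := norm_le_of_hasDerivAt_neg_smul_add hv hg hy.1
    rw [h_neg_one, smul_zero, sub_zero, sub_neg_eq_add] at this
    linarith [hpart le_rfl hy.1 hy.2]

theorem norm_deriv_le_and_mul_norm_le_of_expKernelIntegral_le {m B : ℝ} {φ : ℝ → E} (hm : 1 ≤ m)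
    (hφ : ContDiff ℝ 2 φ) (h_neg_one : φ (-1) = 0) (h_one : φ 1 = 0)
    (hB : ∀ y ∈ Icc (-1:ℝ) 1,
      expKernelIntegral m (fun s => deriv (deriv φ) s - m ^ 2 • φ s) y ≤ B) :
    ∀ y ∈ Icc (-1:ℝ) 1, ‖deriv φ y‖ ≤ 3 * B ∧ m * ‖φ y‖ ≤ 3 * B := by
  intro y hy
  have hbound := fun {y} hy =>
    norm_deriv_add_smul_le_and_norm_deriv_sub_smul_le hφ h_neg_one h_one hB (y := y) hy
  have hB0 : 0 ≤ B := (intervalIntegral.integral_nonneg (by norm_num)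
    fun s _ => by positivity).trans (hB 0 (by norm_num))
  have hdecay : exp (-(m * 2)) ≤ 1 / 2 := by
    rw [exp_neg, inv_le_comm₀ (exp_pos _) (by norm_num)]
    linarith [add_one_le_exp (m * 2)]
  have hends : ‖deriv φ (-1)‖ + ‖deriv φ 1‖ ≤ 4 * B := by
    have h1 := (hbound (y := -1) (by norm_num)).1
    have h2 := (hbound (y := 1) (by norm_num)).2
    rw [h_neg_one, smul_zero, add_zero, sub_neg_eq_add, one_add_one_eq_two] at h1
    rw [h_one, smul_zero, sub_zero, one_add_one_eq_two] at h2
    nlinarith [norm_nonneg (deriv φ 1), norm_nonneg (deriv φ (-1))]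
  set u := deriv φ y + m • φ y
  set v := deriv φ y - m • φ y
  have huv : ‖u‖ + ‖v‖ ≤ 6 * B := by
    have h1 : exp (-(m * (1 - y))) ≤ 1 := exp_le_one_iff.2 (by nlinarith [hy.2])
    have h2 : exp (-(m * (y + 1))) ≤ 1 := exp_le_one_iff.2 (by nlinarith [hy.1])
    nlinarith [hbound hy, norm_nonneg (deriv φ 1), norm_nonneg (deriv φ (-1))]
  constructor
  · rw [show deriv φ y = (1 / 2 : ℝ) • (u + v) by module, norm_smul, norm_of_nonneg (by norm_num)]
    linarith [norm_add_le u v]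
  · rw [← norm_of_nonneg (by linarith : 0 ≤ m), ← norm_smul,
      show m • φ y = (1 / 2 : ℝ) • (u - v) by module, norm_smul, norm_of_nonneg (by norm_num)]
    linarith [norm_sub_le u v]

end VectorValued

theorem integral_exp_neg_mul_le {c : ℝ} (hc : 0 < c) (L : ℝ) :
    ∫ x in (0:ℝ)..L, exp (-(c * x)) ≤ 1 / c := by
  rw [intervalIntegral.integral_comp_mul_left (fun x => exp (-x)) hc.ne',
    intervalIntegral.integral_comp_neg]
  simp only [mul_zero, neg_zero, integral_exp, exp_zero, smul_eq_mul, one_div]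
  exact mul_le_of_le_one_right (inv_nonneg.2 hc.le) (by linarith [exp_pos (-(c * L))])

theorem integral_exp_neg_mul_abs_sub_sq_le {m y : ℝ} (hm : 0 < m) (hy : y ∈ Icc (-1:ℝ) 1) :
    ∫ s in (-1:ℝ)..1, exp (-(m * |y - s|)) ^ 2 ≤ 1 / m := by
  have hsq : ∀ s, exp (-(m * |y - s|)) ^ 2 = exp (-(2 * m * |y - s|)) := fun s => by
    rw [← exp_nat_mul]; ring_nf
  have hint : ∀ a b : ℝ, IntervalIntegrable (fun s => exp (-(2 * m * |y - s|))) volume a b :=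
    fun a b => (by fun_prop : Continuous fun s => exp (-(2 * m * |y - s|))).intervalIntegrable a b
  have hleft : ∫ s in (-1:ℝ)..y, exp (-(2 * m * |y - s|)) =
      ∫ x in (0:ℝ)..y + 1, exp (-(2 * m * x)) := by
    rw [← sub_self y, ← sub_neg_eq_add, ← intervalIntegral.integral_comp_sub_left]
    refine intervalIntegral.integral_congr fun s hs => ?_
    rw [uIcc_of_le hy.1] at hs
    simp only [abs_of_nonneg (sub_nonneg.2 hs.2)]
  have hright : ∫ s in y..1, exp (-(2 * m * |y - s|)) =
      ∫ x in (0:ℝ)..1 - y, exp (-(2 * m * x)) := by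
    rw [← sub_self y, ← intervalIntegral.integral_comp_sub_right]
    refine intervalIntegral.integral_congr fun s hs => ?_
    rw [uIcc_of_le hy.2] at hs
    simp only [abs_sub_comm y, abs_of_nonneg (sub_nonneg.2 hs.1)]
  simp_rw [hsq]
  rw [← intervalIntegral.integral_add_adjacent_intervals (hint _ y) (hint y _), hleft, hright]
  have h2m : 0 < 2 * m := by positivity
  calc _ ≤ 1 / (2 * m) + 1 / (2 * m) :=
        add_le_add (integral_exp_neg_mul_le h2m _) (integral_exp_neg_mul_le h2m _)
    _ = 1 / m := by field_simp; ring

theorem integral_Icc_mul_le_sqrt_mul_sqrt {a b : ℝ} {f g : ℝ → ℝ}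
    (hf : ContinuousOn f (Icc a b)) (hg : ContinuousOn g (Icc a b)) :
    ∫ x in Icc a b, f x * g x ≤ √(∫ x in Icc a b, f x ^ 2) * √(∫ x in Icc a b, g x ^ 2) := by
  have hmemLp : ∀ {h : ℝ → ℝ}, ContinuousOn h (Icc a b) →
      MemLp h (ENNReal.ofReal 2) (volume.restrict (Icc a b)) := fun {h} hh => by
    obtain ⟨C, hC⟩ := isCompact_Icc.exists_bound_of_continuousOn hh
    exact MemLp.of_bound (hh.aestronglyMeasurable measurableSet_Icc) C
      ((ae_restrict_iff' measurableSet_Icc).2 (Filter.Eventually.of_forall hC))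
  have hholder :=
    integral_mul_norm_le_Lp_mul_Lq Real.HolderConjugate.two_two (hmemLp hf) (hmemLp hg)
  simp only [norm_eq_abs, rpow_two, sq_abs, ← sqrt_eq_rpow] at hholder
  refine le_trans (integral_mono ((hf.mul hg).integrableOn_Icc)
    ((hf.abs.mul hg.abs).integrableOn_Icc) fun x => ?_) hholder
  simpa only [Pi.mul_apply, ← abs_mul] using le_abs_self _

theorem nL1_eq_intervalIntegral (f : ℝ → ℂ) : nL1 f = ∫ y in (-1:ℝ)..1, ‖f y‖ :=
  setIntegral_Icc_eq_intervalIntegral (by norm_num) _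

theorem nL2_eq_sqrt (f : ℝ → ℂ) : nL2 f = √(∫ y in Icc (-1:ℝ) 1, ‖f y‖ ^ 2) := by
  rw [nL2, sqrt_eq_rpow]

theorem nL2_sq (f : ℝ → ℂ) : nL2 f ^ 2 = ∫ y in (-1:ℝ)..1, ‖f y‖ ^ 2 := by
  rw [nL2_eq_sqrt, sq_sqrt (setIntegral_nonneg measurableSet_Icc fun y _ => by positivity),
    setIntegral_Icc_eq_intervalIntegral (by norm_num)]

theorem innI_eq_intervalIntegral (f g : ℝ → ℂ) :
    innI f g = ∫ y in (-1:ℝ)..1, f y * (starRingEnd ℂ) (g y) :=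
  setIntegral_Icc_eq_intervalIntegral (by norm_num) _

theorem expKernelIntegral_le_nL1 {m : ℝ} (hm : 0 ≤ m) {w : ℝ → ℂ}
    (hw : ContinuousOn w (Icc (-1:ℝ) 1)) (y : ℝ) : expKernelIntegral m w y ≤ nL1 w := by
  rw [expKernelIntegral, nL1_eq_intervalIntegral]
  refine intervalIntegral.integral_mono_on (by norm_num)
    (((by fun_prop : Continuous fun s => exp (-(m * |y - s|))).continuousOn.mul
      hw.norm).intervalIntegrable_of_Icc (by norm_num))
    (hw.norm.intervalIntegrable_of_Icc (by norm_num)) fun s _ => ?_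
  exact mul_le_of_le_one_left (norm_nonneg _) (exp_le_one_iff.2 (neg_nonpos.2 (by positivity)))

theorem expKernelIntegral_le_nL2 {m y : ℝ} (hm : 0 < m) (hy : y ∈ Icc (-1:ℝ) 1) {w : ℝ → ℂ}
    (hw : ContinuousOn w (Icc (-1:ℝ) 1)) : expKernelIntegral m w y ≤ m ^ (-(1:ℝ) / 2) * nL2 w := by
  have hsqrt : √(1 / m) = m ^ (-(1:ℝ) / 2) := by
    rw [sqrt_eq_rpow, one_div, inv_rpow hm.le, ← rpow_neg hm.le, neg_div]
  rw [expKernelIntegral, ← setIntegral_Icc_eq_intervalIntegral (by norm_num), nL2_eq_sqrt, ← hsqrt]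
  refine (integral_Icc_mul_le_sqrt_mul_sqrt
    (by fun_prop : Continuous fun s => exp (-(m * |y - s|))).continuousOn hw.norm).trans ?_
  gcongr
  rw [setIntegral_Icc_eq_intervalIntegral (by norm_num)]
  exact integral_exp_neg_mul_abs_sub_sq_le hm hy

theorem nLinf_le {f : ℝ → ℂ} {M : ℝ} (h : ∀ y ∈ Icc (-1:ℝ) 1, ‖f y‖ ≤ M) : nLinf f ≤ M :=
  have : Nonempty (Icc (-1:ℝ) 1) := ⟨⟨0, by norm_num⟩⟩
  ciSup_le fun y => h y y.2

theorem nLinf_add_mul_nLinf_le {f g : ℝ → ℂ} {m B : ℝ} (hm : 0 ≤ m)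
    (h : ∀ y ∈ Icc (-1:ℝ) 1, ‖f y‖ ≤ B ∧ m * ‖g y‖ ≤ B) : nLinf f + m * nLinf g ≤ 2 * B := by
  have : Nonempty (Icc (-1:ℝ) 1) := ⟨⟨0, by norm_num⟩⟩
  have hg : m * nLinf g ≤ B := by
    rw [nLinf, Real.mul_iSup_of_nonneg hm]
    exact ciSup_le fun y => (h y y.2).2
  linarith [nLinf_le fun y hy => (h y hy).1]

theorem integral_deriv_deriv_mul_conj {a b : ℝ} {φ : ℝ → ℂ} (hφ : ContDiff ℝ 2 φ)
    (ha : φ a = 0) (hb : φ b = 0) :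
    ∫ x in a..b, deriv (deriv φ) x * (starRingEnd ℂ) (φ x) =
      -∫ x in a..b, (‖deriv φ x‖ : ℂ) ^ 2 := by
  have hφ' := hφ.differentiable (by norm_num)
  have hφ'' := hφ.differentiable_deriv_two
  have hibp := intervalIntegral.integral_mul_deriv_eq_deriv_mul (a := a) (b := b)
    (u := fun x => (starRingEnd ℂ) (φ x)) (v := deriv φ)
    (fun x _ => (hφ' x).hasDerivAt.star) (fun x _ => (hφ'' x).hasDerivAt)
    ((hφ.continuous_deriv (by norm_num)).star.intervalIntegrable _ _)
    ((hφ.deriv' (n := 1)).continuous_deriv_one.intervalIntegrable _ _)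
  simp only [ha, hb, map_zero, zero_mul, sub_zero, zero_sub] at hibp
  simp only [mul_comm (deriv (deriv φ) _), hibp, Complex.star_def, Complex.conj_mul']

theorem innI_neg_eq_energy {m : ℝ} {w φ : ℝ → ℂ} (hφ : ContDiff ℝ 2 φ)
    (h_neg_one : φ (-1) = 0) (h_one : φ 1 = 0)
    (hw : ∀ y ∈ Icc (-1:ℝ) 1, deriv (deriv φ) y - (m:ℂ) ^ 2 * φ y = w y) :
    innI (fun y => -w y) φ = ((nL2 (deriv φ) ^ 2 + m ^ 2 * nL2 φ ^ 2 : ℝ) : ℂ) := by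
  have hint : ∀ f : ℝ → ℂ, Continuous f → IntervalIntegrable f volume (-1) 1 :=
    fun f hf => hf.intervalIntegrable _ _
  have hφc := hφ.continuous
  have hφ''c := (hφ.deriv' (n := 1)).continuous_deriv_one
  rw [innI_eq_intervalIntegral]
  calc ∫ y in (-1:ℝ)..1, -w y * (starRingEnd ℂ) (φ y)
      = ∫ y in (-1:ℝ)..1, (-(deriv (deriv φ) y * (starRingEnd ℂ) (φ y)) +
          (m:ℂ) ^ 2 * (‖φ y‖ : ℂ) ^ 2) := by
        refine intervalIntegral.integral_congr fun y hy => ?_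
        rw [uIcc_of_le (by norm_num)] at hy
        rw [← hw y hy, ← Complex.mul_conj']
        ring
    _ = (∫ y in (-1:ℝ)..1, (‖deriv φ y‖ : ℂ) ^ 2) +
          (m:ℂ) ^ 2 * ∫ y in (-1:ℝ)..1, (‖φ y‖ : ℂ) ^ 2 := by
        rw [intervalIntegral.integral_add (hint _ (by fun_prop)) (hint _ (by fun_prop)),
          intervalIntegral.integral_neg, integral_deriv_deriv_mul_conj hφ h_neg_one h_one, neg_neg,
          intervalIntegral.integral_const_mul]
    _ = _ := by
        simp only [nL2_sq, Complex.ofReal_add, Complex.ofReal_mul, Complex.ofReal_pow,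
          ← intervalIntegral.integral_ofReal]

theorem norm_innI_le_nL1_mul {f g : ℝ → ℂ} (hf : ContinuousOn f (Icc (-1:ℝ) 1)) {M : ℝ}
    (hg : ∀ y ∈ Icc (-1:ℝ) 1, ‖g y‖ ≤ M) : ‖innI f g‖ ≤ nL1 f * M := by
  rw [nL1, ← integral_mul_const]
  refine norm_integral_le_of_norm_le (hf.norm.mul continuousOn_const |>.integrableOn_Icc)
    ((ae_restrict_iff' measurableSet_Icc).2 (Filter.Eventually.of_forall fun y hy => ?_))
  rw [norm_mul, RCLike.norm_conj]
  exact mul_le_mul_of_nonneg_left (hg y hy) (norm_nonneg _)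

/-- Elliptic estimates for the stream function in terms of the vorticity
(Lemma 9.3 of the paper). -/
theorem statement18 :
    ∃ C : ℝ, 0 < C ∧
      ∀ (k : ℤ) (w φ : ℝ → ℂ),
        1 ≤ |k| →
        ContinuousOn w (Set.Icc (-1:ℝ) 1) →
        ContDiff ℝ 2 φ →
        (∀ y ∈ Set.Icc (-1:ℝ) 1, deriv (deriv φ) y - (k:ℂ)^2 * φ y = w y) →
        φ (-1) = 0 → φ 1 = 0 →
        (((nL2 (deriv φ))^2 + (k:ℝ)^2 * (nL2 φ)^2 : ℝ) : ℂ)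
            = innI (fun y => -w y) φ
          ∧ (nL2 (deriv φ))^2 + (k:ℝ)^2 * (nL2 φ)^2 ≤ C * |(k:ℝ)|⁻¹ * (nL1 w)^2
          ∧ nLinf (deriv φ) + |(k:ℝ)| * nLinf φ ≤ C * nL1 w
          ∧ nLinf (deriv φ) + |(k:ℝ)| * nLinf φ ≤ C * |(k:ℝ)| ^ (-(1:ℝ)/2) * nL2 w := by
  refine ⟨6, by norm_num, fun k w φ hk hw hφ hode h_neg_one h_one => ?_⟩
  set m := |(k:ℝ)|
  have hm : 1 ≤ m := by simpa [m, ← Int.cast_abs] using (Int.cast_le (R := ℝ)).2 hk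
  have hode' : EqOn (fun s => deriv (deriv φ) s - m ^ 2 • φ s) w (Icc (-1:ℝ) 1) := fun y hy => by
    show deriv (deriv φ) y - m ^ 2 • φ y = w y
    rw [← hode y hy, Complex.real_smul, sq_abs]
    push_cast
    rfl
  have hL1 := norm_deriv_le_and_mul_norm_le_of_expKernelIntegral_le hm hφ h_neg_one h_one
    fun y _ => (expKernelIntegral_congr hode' y).trans_le
      (expKernelIntegral_le_nL1 (by linarith) hw y)
  have hL2 := norm_deriv_le_and_mul_norm_le_of_expKernelIntegral_le hm hφ h_neg_one h_one
    fun y hy => (expKernelIntegral_congr hode' y).trans_le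
      (expKernelIntegral_le_nL2 (by linarith) hy hw)
  have henergy := innI_neg_eq_energy (m := k) hφ h_neg_one h_one (by exact_mod_cast hode)
  refine ⟨henergy.symm, ?_, ?_, ?_⟩
  · have hφ_le : ∀ y ∈ Icc (-1:ℝ) 1, ‖φ y‖ ≤ 3 * nL1 w / m := fun y hy => by
      rw [le_div_iff₀ (by linarith)]
      linarith [(hL1 y hy).2]
    have hinn := norm_innI_le_nL1_mul (f := fun y => -w y) hw.neg hφ_le
    rw [henergy, Complex.norm_real, norm_of_nonneg (by positivity)] at hinn
    have hnL1 : nL1 (fun y => -w y) = nL1 w := by simp only [nL1, norm_neg]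
    have hX : 0 ≤ m⁻¹ * nL1 w ^ 2 := by positivity
    calc _ ≤ nL1 w * (3 * nL1 w / m) := hnL1 ▸ hinn
      _ = 3 * (m⁻¹ * nL1 w ^ 2) := by ring
      _ ≤ 6 * m⁻¹ * nL1 w ^ 2 := by linarith
  · linarith [nLinf_add_mul_nLinf_le (by linarith) hL1]
  · linarith [nLinf_add_mul_nLinf_le (by linarith) hL2]
end
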